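/- arXiv:2402.09238 — 4 statements merged into one kernel-verified Lean document; each statement's English description precedes it below -/
import Mathlib

section
/- Let X be a Banach sequence space contained in ω = ℂ^ℕ whose norm is an absolute Riesz norm and which is solid. If the classical Cesàro operator C_1 given by (C_1 x)_n = (x_0 + ⋯ + x_n)/(n+1) is a bounded operator on X, then for every t ∈ [0,1) the generalized Cesàro operator C_t, given by (C_t x)_n = (t^n x_0 + t^{n-1} x_1 + ⋯ + x_n)/(n+1), is also bounded on X with ‖C_t‖ ≤ ‖C_1‖. -/
/-!
For `0 ≤ t ≤ 1` every weight `t ^ (n - i)` is at most `1`, so `|C_t x| ≤ C_1 |x|` coordinatewise.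
Since `X` is solid and `|x| ∈ X`, the sequence `C_t x` therefore lies in `X`, and the Riesz
property gives `‖C_t x‖ ≤ ‖C_1 |x|‖ ≤ ‖C_1‖ ‖|x|‖ = ‖C_1‖ ‖x‖`.
-/

/-- The generalized Cesàro operator on ω = ℂ^ℕ₀:
`(Ces t x) n = (Σ_{i=0}^n t^{n-i} x_i) / (n+1)`. -/
noncomputable def Ces (t : ℝ) (x : ℕ → ℂ) : ℕ → ℂ :=
  fun n => (∑ i ∈ Finset.range (n + 1), (t : ℂ) ^ (n - i) * x i) / ((n : ℂ) + 1)

open Finset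

noncomputable def cesLinearMap (t : ℝ) : (ℕ → ℂ) →ₗ[ℂ] (ℕ → ℂ) where
  toFun := Ces t
  map_add' x y := by
    funext n
    simp only [Ces, Pi.add_apply, mul_add, sum_add_distrib, add_div]
  map_smul' c x := by
    funext n
    simp only [Ces, Pi.smul_apply, smul_eq_mul, RingHom.id_apply, mul_sum, mul_div_assoc',
      mul_left_comm c]

@[simp]
lemma cesLinearMap_apply (t : ℝ) (x : ℕ → ℂ) : cesLinearMap t x = Ces t x := rfl

lemma Ces_one_norm (f : ℕ → ℂ) (n : ℕ) :
    Ces 1 (fun i => (‖f i‖ : ℂ)) n = ((∑ i ∈ range (n + 1), ‖f i‖) / (n + 1) : ℝ) := by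
  simp [Ces]

lemma norm_Ces_le_Ces_one_norm {t : ℝ} (ht0 : 0 ≤ t) (ht1 : t ≤ 1) (f : ℕ → ℂ) (n : ℕ) :
    ‖Ces t f n‖ ≤ ‖Ces 1 (fun i => (‖f i‖ : ℂ)) n‖ := by
  have hn : (0 : ℝ) < n + 1 := by positivity
  rw [Ces_one_norm, Complex.norm_real, Real.norm_of_nonneg (by positivity), Ces, norm_div,
    show ((n : ℂ) + 1) = ((n + 1 : ℝ) : ℂ) by push_cast; rfl, Complex.norm_real,
    Real.norm_of_nonneg hn.le]
  gcongr
  refine (norm_sum_le _ _).trans (sum_le_sum fun i _ => ?_)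
  rw [norm_mul, norm_pow, Complex.norm_real, Real.norm_of_nonneg ht0]
  exact mul_le_of_le_one_left (norm_nonneg _) (pow_le_one₀ ht0 ht1)

lemma LinearMap.exists_comp_eq_of_injective {R M N : Type*} [Semiring R] [AddCommMonoid M]
    [AddCommMonoid N] [Module R M] [Module R N] (e : M →ₗ[R] N) (he : Function.Injective e)
    (A : N →ₗ[R] N) (hA : ∀ x, A (e x) ∈ LinearMap.range e) :
    ∃ T : M →ₗ[R] M, ∀ x, e (T x) = A (e x) :=
  ⟨(LinearEquiv.ofInjective e he).symm.toLinearMap ∘ₗ (A ∘ₗ e).codRestrict _ hA, fun _ =>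
    LinearEquiv.ofInjective_symm_apply (h := he) e _⟩

theorem stmt_5_general {X : Type*} [NormedAddCommGroup X] [NormedSpace ℂ X]
    (e : X →ₗ[ℂ] (ℕ → ℂ)) (he : Function.Injective e)
    -- the norm is a Riesz norm:
    (hriesz : ∀ x y : X, (∀ n, ‖e x n‖ ≤ ‖e y n‖) → ‖x‖ ≤ ‖y‖)
    -- the norm is absolute: |x| ∈ X whenever x ∈ X:
    (habs : ∀ x : X, ∃ x' : X, ∀ n, e x' n = ((‖e x n‖ : ℝ) : ℂ))
    -- X is solid:
    (hsolid : ∀ (f : ℕ → ℂ) (y : X),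
      (∀ n, ‖f n‖ ≤ ‖e y n‖) → ∃ x : X, e x = f)
    -- C₁ is bounded on X:
    (C1 : X →L[ℂ] X) (hC1 : ∀ x : X, e (C1 x) = Ces 1 (e x)) :
    ∀ t : ℝ, t ∈ Set.Ico (0 : ℝ) 1 →
      ∃ Ct : X →L[ℂ] X, (∀ x : X, e (Ct x) = Ces t (e x)) ∧ ‖Ct‖ ≤ ‖C1‖ := by
  rintro t ⟨ht0, ht1⟩
  have dominated : ∀ x : X, ∃ x' : X, ‖x'‖ = ‖x‖ ∧ ∀ n, ‖Ces t (e x) n‖ ≤ ‖e (C1 x') n‖ := by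
    intro x
    obtain ⟨x', hx'⟩ := habs x
    have hx'_eq : e x' = fun n => (‖e x n‖ : ℂ) := funext hx'
    have hnorm : ∀ n, ‖e x' n‖ = ‖e x n‖ := fun n => by simp [hx']
    refine ⟨x', le_antisymm (hriesz _ _ (hnorm · |>.le)) (hriesz _ _ (hnorm · |>.ge)), ?_⟩
    intro n
    rw [hC1, hx'_eq]
    exact norm_Ces_le_Ces_one_norm ht0 ht1.le _ n
  obtain ⟨T, hT⟩ := LinearMap.exists_comp_eq_of_injective e he (cesLinearMap t) fun x => by
    obtain ⟨x', -, hdom⟩ := dominated x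
    exact hsolid _ (C1 x') hdom
  have hbound : ∀ x, ‖T x‖ ≤ ‖C1‖ * ‖x‖ := fun x => by
    obtain ⟨x', hx'_norm, hdom⟩ := dominated x
    calc ‖T x‖ ≤ ‖C1 x'‖ := hriesz _ _ fun n => by simpa [hT] using hdom n
      _ ≤ ‖C1‖ * ‖x‖ := hx'_norm ▸ C1.le_opNorm x'
  exact ⟨T.mkContinuous ‖C1‖ hbound, fun x => by simpa using hT x,
    T.mkContinuous_norm_le (norm_nonneg _) hbound⟩

/-- Let X ⊆ ω be a Banach sequence space (realized by an injective linear
embedding e : X → ω) which is solid and whose norm is an absolute Riesz norm.  If the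
classical Cesàro operator C₁ is bounded on X, then for every t ∈ [0,1) the generalized
Cesàro operator C_t is bounded on X with ‖C_t‖ ≤ ‖C₁‖. -/
theorem stmt_5 {X : Type*} [NormedAddCommGroup X] [NormedSpace ℂ X] [CompleteSpace X]
    (e : X →ₗ[ℂ] (ℕ → ℂ)) (he : Function.Injective e)
    -- the norm is a Riesz norm:
    (hriesz : ∀ x y : X, (∀ n, ‖e x n‖ ≤ ‖e y n‖) → ‖x‖ ≤ ‖y‖)
    -- the norm is absolute: |x| ∈ X whenever x ∈ X:
    (habs : ∀ x : X, ∃ x' : X, ∀ n, e x' n = ((‖e x n‖ : ℝ) : ℂ))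
    -- X is solid:
    (hsolid : ∀ (f : ℕ → ℂ) (y : X),
      (∀ n, ‖f n‖ ≤ ‖e y n‖) → ∃ x : X, e x = f)
    -- C₁ is bounded on X:
    (C1 : X →L[ℂ] X) (hC1 : ∀ x : X, e (C1 x) = Ces 1 (e x)) :
    ∀ t : ℝ, t ∈ Set.Ico (0 : ℝ) 1 →
      ∃ Ct : X →L[ℂ] X, (∀ x : X, e (Ct x) = Ces t (e x)) ∧ ‖Ct‖ ≤ ‖C1‖ :=
  stmt_5_general e he hriesz habs hsolid C1 hC1
end

section
/- For every t ∈ [0,1) and every m ∈ ℕ₀, the vector x_t^[m] ∈ ω defined by (x_t^[m])_j = 0 for 0 ≤ j < m, (x_t^[m])_m = 1, and (x_t^[m])_{m+n} = (∏_{i=1}^n (m+i)/n!) · t^n for n ≥ 1, is an eigenvector of the generalized Cesàro operator C_t on ω with eigenvalue 1/(m+1), i.e., C_t x_t^[m] = (1/(m+1)) x_t^[m]. -/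
/-- The vector x_t^[m] ∈ ω: zero in coordinates j < m, 1 in coordinate m, and
`(x_t^[m])_{m+n} = (∏_{i=1}^n (m+i) / n!) t^n` for n ≥ 1 (here written at
coordinate j = m+n, so n = j - m). -/
noncomputable def xvec (t : ℝ) (m : ℕ) : ℕ → ℂ :=
  fun j => if j < m then 0
    else (∏ i ∈ Finset.range (j - m), ((m : ℂ) + (i : ℂ) + 1)) / (Nat.factorial (j - m) : ℂ)
      * (t : ℂ) ^ (j - m)

open Finset

lemma prod_range_cast_add_add_one (m k : ℕ) :
    ∏ i ∈ range k, ((m : ℂ) + (i : ℂ) + 1) = (k.factorial : ℂ) * ((m + k).choose m : ℂ) := by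
  have h := Nat.ascFactorial_eq_factorial_mul_choose m k
  rw [Nat.ascFactorial_eq_prod_range, ← Nat.choose_symm_add] at h
  exact_mod_cast (prod_congr rfl fun i _ => by ring).trans h

lemma xvec_of_lt (t : ℝ) {m j : ℕ} (h : j < m) : xvec t m j = 0 :=
  if_pos h

lemma xvec_add (t : ℝ) (m k : ℕ) : xvec t m (m + k) = ((m + k).choose m : ℂ) * (t : ℂ) ^ k := by
  have hk : (k.factorial : ℂ) ≠ 0 := Nat.cast_ne_zero.mpr k.factorial_ne_zero
  simp only [xvec, Nat.add_sub_cancel_left, prod_range_cast_add_add_one,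
    if_neg (by omega : ¬m + k < m)]
  field_simp

lemma Ces_apply_eq_zero {t : ℝ} {x : ℕ → ℂ} {j : ℕ} (hx : ∀ i ≤ j, x i = 0) : Ces t x j = 0 := by
  rw [Ces, sum_eq_zero fun i hi => by rw [hx i (Nat.lt_succ_iff.mp (mem_range.mp hi)), mul_zero],
    zero_div]

lemma sum_pow_mul_xvec (t : ℝ) (m k : ℕ) :
    ∑ i ∈ range (m + k + 1), (t : ℂ) ^ (m + k - i) * xvec t m i
      = ((m + k + 1).choose (m + 1) : ℂ) * (t : ℂ) ^ k := by
  have hterm : ∀ i ∈ range (k + 1),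
      (t : ℂ) ^ (m + k - (m + i)) * xvec t m (m + i) = ((i + m).choose m : ℂ) * (t : ℂ) ^ k := by
    intro i hi
    have hik : i ≤ k := Nat.lt_succ_iff.mp (mem_range.mp hi)
    rw [xvec_add, Nat.add_sub_add_left, add_comm m i, mul_left_comm, ← pow_add,
      Nat.sub_add_cancel hik]
  rw [add_assoc m k 1, sum_range_add,
    sum_eq_zero fun i hi => by rw [xvec_of_lt t (mem_range.mp hi), mul_zero],
    zero_add, sum_congr rfl hterm, ← sum_mul, ← Nat.cast_sum, Nat.sum_range_add_choose,
    add_comm k m, add_assoc]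

theorem stmt_6_general (t : ℝ) (m : ℕ) :
    Ces t (xvec t m) = fun j => (1 / ((m : ℂ) + 1)) * xvec t m j := by
  funext j
  rcases lt_or_ge j m with hj | hj
  · rw [Ces_apply_eq_zero fun i hi => xvec_of_lt t (hi.trans_lt hj), xvec_of_lt t hj, mul_zero]
  · obtain ⟨k, rfl⟩ := Nat.exists_eq_add_of_le hj
    have hpascal : ((m + k + 1 : ℕ) : ℂ) * ((m + k).choose m : ℂ)
        = ((m + k + 1).choose (m + 1) : ℂ) * ((m : ℂ) + 1) := by
      exact_mod_cast Nat.add_one_mul_choose_eq (m + k) m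
    have hm : (m : ℂ) + 1 ≠ 0 := Nat.cast_add_one_ne_zero m
    have hmk : ((m + k : ℕ) : ℂ) + 1 ≠ 0 := Nat.cast_add_one_ne_zero (m + k)
    rw [Ces, sum_pow_mul_xvec, xvec_add, div_eq_iff hmk, one_div, inv_mul_eq_div,
      div_mul_eq_mul_div, eq_div_iff hm]
    push_cast at hpascal ⊢
    linear_combination (t : ℂ) ^ k * hpascal.symm

/-- For every t ∈ [0,1) and m ∈ ℕ₀, x_t^[m] is an eigenvector of the
generalized Cesàro operator C_t on ω with eigenvalue 1/(m+1). -/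
theorem stmt_6 (t : ℝ) (ht : t ∈ Set.Ico (0 : ℝ) 1) (m : ℕ) :
    Ces t (xvec t m) = fun j => (1 / ((m : ℂ) + 1)) * xvec t m j :=
  stmt_6_general t m
end

section
/- For every t ∈ [0,1), the bounded operator C_t on ℓ^∞(ℕ₀) satisfies: for each x ∈ ℓ^∞ and each n ∈ ℕ₀, |(C_t x)_n| ≤ ‖x‖_∞ / ((n+1)(1−t)). Consequently the image of C_t : ℓ^∞ → ℓ^∞ is contained in ℓ^p for every p > 1. -/
open Finset

lemma geom_sum_le_inv_one_sub {t : ℝ} (ht0 : 0 ≤ t) (ht1 : t < 1) (n : ℕ) :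
    ∑ i ∈ range n, t ^ i ≤ (1 - t)⁻¹ := by
  have h := geom_sum_Ico_le_of_lt_one (m := 0) (n := n) ht0 ht1
  rwa [← range_eq_Ico, pow_zero, one_div] at h

lemma norm_sum_pow_sub_mul_le {t M : ℝ} (ht0 : 0 ≤ t) (ht1 : t < 1) {x : ℕ → ℂ}
    (hx : ∀ i, ‖x i‖ ≤ M) (n : ℕ) :
    ‖∑ i ∈ range (n + 1), (t : ℂ) ^ (n - i) * x i‖ ≤ M / (1 - t) := by
  have hM : 0 ≤ M := (norm_nonneg _).trans (hx 0)
  calc ‖∑ i ∈ range (n + 1), (t : ℂ) ^ (n - i) * x i‖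
      ≤ ∑ i ∈ range (n + 1), t ^ (n - i) * M := by
        refine (norm_sum_le _ _).trans (sum_le_sum fun i _ => ?_)
        rw [norm_mul, norm_pow, Complex.norm_real, Real.norm_of_nonneg ht0]
        exact mul_le_mul_of_nonneg_left (hx i) (pow_nonneg ht0 _)
    _ = (∑ i ∈ range (n + 1), t ^ i) * M := by
        rw [← sum_mul, ← sum_range_reflect (fun i => t ^ i) (n + 1)]
        rfl
    _ ≤ (1 - t)⁻¹ * M := by gcongr; exact geom_sum_le_inv_one_sub ht0 ht1 _
    _ = M / (1 - t) := inv_mul_eq_div _ _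

lemma norm_ces_le {t M : ℝ} (ht0 : 0 ≤ t) (ht1 : t < 1) {x : ℕ → ℂ}
    (hx : ∀ i, ‖x i‖ ≤ M) (n : ℕ) :
    ‖Ces t x n‖ ≤ M / (((n : ℝ) + 1) * (1 - t)) := by
  have hn : ‖((n : ℂ) + 1)‖ = (n : ℝ) + 1 := by exact_mod_cast Complex.norm_natCast (n + 1)
  rw [Ces, norm_div, hn, mul_comm, ← div_div]
  gcongr
  exact norm_sum_pow_sub_mul_le ht0 ht1 hx n

lemma memℓp_inv_natCast_add_one {p : ℝ} (hp : 1 < p) :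
    Memℓp (fun n : ℕ => ((n : ℝ) + 1)⁻¹) (ENNReal.ofReal p) := by
  apply memℓp_gen
  rw [ENNReal.toReal_ofReal (by linarith)]
  refine ((summable_nat_add_iff 1).2 (Real.summable_one_div_nat_rpow.2 hp)).congr fun n => ?_
  rw [Real.norm_of_nonneg (by positivity), Real.inv_rpow (by positivity), one_div]
  push_cast
  rfl

/-- For t ∈ [0,1) and x ∈ ℓ^∞(ℕ₀), |(C_t x)_n| ≤ ‖x‖_∞/((n+1)(1−t)) for
every n; consequently C_t x ∈ ℓ^p for every p > 1. -/
theorem stmt_7 (t : ℝ) (ht : t ∈ Set.Ico (0 : ℝ) 1)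
    (x : lp (fun _ : ℕ => ℂ) ⊤) :
    (∀ n : ℕ, ‖Ces t (fun i => x i) n‖ ≤ ‖x‖ / (((n : ℝ) + 1) * (1 - t))) ∧
      (∀ p : ℝ, 1 < p → Memℓp (Ces t (fun i => x i)) (ENNReal.ofReal p)) := by
  have hbound := norm_ces_le ht.1 ht.2 (lp.norm_apply_le_norm ENNReal.top_ne_zero x)
  refine ⟨hbound, fun p hp => ?_⟩
  refine ((memℓp_inv_natCast_add_one hp).const_mul (‖x‖ / (1 - t))).mono fun n => ?_
  exact (hbound n).trans_eq (by rw [mul_comm ((n : ℝ) + 1), ← div_div, div_eq_mul_inv])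
end

section
/- For each p ∈ (1,∞), the operator B on ℓ^p(ℕ₀) defined by (By)_0 = 0 and (By)_n = (1/(n(n+1))) Σ_{j=0}^{n−1} y_j for n ≥ 1, is a bounded linear operator with ‖B‖ ≤ (Σ_{k=2}^∞ k^{−p})^{1/p}, and moreover B is a compact operator (being the operator-norm limit of its finite-rank truncations, with ‖B − B^{(N)}‖ ≤ (Σ_{n=N}^∞ (n+1)^{−p})^{1/p}). -/
/-!
Every coordinate of `B y` is controlled by a fixed sequence: `‖y_j‖ ≤ ‖y‖_p` gives
`|(B y)_n| ≤ ‖y‖_p · n / (n (n + 1)) = ‖y‖_p / (n + 1)` for `n ≥ 1`, and the weight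
`e_n = 1 / (n + 1)` (`e_0 = 0`) lies in `ℓ^p` for `p > 1`, with `‖e‖_p = (∑_{k ≥ 2} k^{-p})^{1/p}`.
An operator into `ℓ^p` dominated coordinatewise by `‖y‖ e` has norm at most `‖e‖_p`. Applied to
`B` minus its truncation to the coordinates in a finite set `s`, which is dominated by `e`
with the coordinates in `s` erased, this shows that `B` is the norm limit of finite-rank
operators, since `p < ∞` makes the tails of `e` tend to zero; hence `B` is compact.
-/

/-- The operator B: (By)₀ = 0 and (By)_n = (1/(n(n+1))) Σ_{j=0}^{n−1} y_j for n ≥ 1. -/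
noncomputable def Bfun (y : ℕ → ℂ) : ℕ → ℂ :=
  fun n => if n = 0 then 0
    else (1 / ((n : ℂ) * ((n : ℂ) + 1))) * ∑ j ∈ Finset.range n, y j

open scoped ENNReal Topology
open Filter Finset

namespace lp

theorem sum_single_apply {α : Type*} [DecidableEq α] {p : ℝ≥0∞} {F : α → Type*}
    [∀ i, NormedAddCommGroup (F i)] (f : lp F p) (s : Finset α) (i : α) :
    (∑ j ∈ s, lp.single p j (f j) : lp F p) i = if i ∈ s then f i else 0 := by
  rw [lp.coeFn_sum, Finset.sum_apply]
  simp [lp.single_apply]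

variable {α 𝕜 E : Type*} [RCLike 𝕜] [NormedAddCommGroup E] [NormedSpace 𝕜 E]
  {p : ℝ≥0∞} [Fact (1 ≤ p)]

theorem norm_le_mul_of_forall_norm_apply_le {F : α → Type*} [∀ i, NormedAddCommGroup (F i)]
    {f : lp F p} {c : ℝ} (hc : 0 ≤ c) (e : lp (fun _ : α => ℝ) p)
    (h : ∀ i, ‖f i‖ ≤ c * e i) : ‖f‖ ≤ c * ‖e‖ := by
  rw [← Real.norm_of_nonneg hc, ← norm_smul]
  refine lp.norm_mono (zero_lt_one.trans_le Fact.out).ne' fun i => (h i).trans ?_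
  rw [lp.coeFn_smul, Pi.smul_apply, norm_smul, Real.norm_of_nonneg hc]
  exact mul_le_mul_of_nonneg_left (Real.le_norm_self _) hc

theorem opNorm_le_of_forall_norm_apply_le {F : α → Type*} [∀ i, NormedAddCommGroup (F i)]
    [∀ i, NormedSpace 𝕜 (F i)] (T : E →L[𝕜] lp F p) (e : lp (fun _ : α => ℝ) p)
    (hT : ∀ y i, ‖T y i‖ ≤ ‖y‖ * e i) : ‖T‖ ≤ ‖e‖ :=
  T.opNorm_le_bound (norm_nonneg e) fun y =>
    (norm_le_mul_of_forall_norm_apply_le (norm_nonneg y) e (hT y)).trans_eq (mul_comm _ _)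

noncomputable def clmOfDominated (L : E →ₗ[𝕜] α → 𝕜) (e : lp (fun _ : α => ℝ) p)
    (hL : ∀ y i, ‖L y i‖ ≤ ‖y‖ * e i) : E →L[𝕜] lp (fun _ : α => 𝕜) p :=
  LinearMap.mkContinuous
    { toFun := fun y => ⟨L y, (lp.memℓp (‖y‖ • e)).mono' fun i => by
          simpa [norm_smul, abs_mul] using (hL y i).trans
            (mul_le_mul_of_nonneg_left (le_abs_self (e i)) (norm_nonneg y))⟩
      map_add' := fun y z => lp.ext (L.map_add y z)
      map_smul' := fun c y => lp.ext (L.map_smul c y) }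
    ‖e‖ fun y => (norm_le_mul_of_forall_norm_apply_le (norm_nonneg y) e (hL y)).trans_eq
      (mul_comm _ _)

theorem isCompactOperator_of_forall_norm_apply_le (hp : p ≠ ∞)
    (T : E →L[𝕜] lp (fun _ : α => 𝕜) p) (e : lp (fun _ : α => ℝ) p)
    (hT : ∀ y i, ‖T y i‖ ≤ ‖y‖ * e i) : IsCompactOperator T := by
  classical
  let truncate : Finset α → E →L[𝕜] lp (fun _ : α => 𝕜) p := fun s =>
    ∑ i ∈ s, (lp.singleContinuousLinearMap 𝕜 _ p i).comp ((lp.evalCLM 𝕜 _ p i).comp T)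
  have truncate_apply : ∀ s y, truncate s y = ∑ i ∈ s, lp.single p i (T y i) := by
    intro s y
    simp [truncate, lp.evalCLM]
  have truncate_compact : ∀ s, IsCompactOperator (truncate s) := fun s =>
    (compactOperator (RingHom.id 𝕜) E _).sum_mem fun i _ => show IsCompactOperator _ from
      (isCompactOperator_of_locallyCompactSpace_dom ((lp.evalCLM 𝕜 _ p i).comp T)).clm_comp
        (lp.singleContinuousLinearMap 𝕜 (fun _ : α => 𝕜) p i)
  have norm_sub_truncate_le : ∀ s, ‖T - truncate s‖ ≤ ‖e - ∑ i ∈ s, lp.single p i (e i)‖ :=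
    fun s => opNorm_le_of_forall_norm_apply_le _ _ fun y i => by
      rw [sub_apply, truncate_apply, lp.coeFn_sub, lp.coeFn_sub, Pi.sub_apply,
        Pi.sub_apply, sum_single_apply, sum_single_apply]
      split_ifs
      · simp
      · simpa using hT y i
  have tail_tendsto : Tendsto (fun s => ‖e - ∑ i ∈ s, lp.single p i (e i)‖) atTop (𝓝 0) := by
    simpa only [norm_sub_rev e, SummationFilter.unconditional_filter] using
      tendsto_iff_norm_sub_tendsto_zero.mp (lp.hasSum_single hp e)
  refine isCompactOperator_of_tendsto (l := atTop) ?_ (Eventually.of_forall truncate_compact)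
  rw [tendsto_iff_norm_sub_tendsto_zero]
  refine squeeze_zero (fun s => norm_nonneg _) (fun s => ?_) tail_tendsto
  rw [norm_sub_rev]
  exact norm_sub_truncate_le s

end lp

noncomputable def bLinearMap : (ℕ → ℂ) →ₗ[ℂ] ℕ → ℂ where
  toFun := Bfun
  map_add' y z := funext fun n => by
    by_cases hn : n = 0 <;> simp [Bfun, hn, Finset.sum_add_distrib, mul_add]
  map_smul' c y := funext fun n => by
    by_cases hn : n = 0 <;> simp [Bfun, hn, Finset.mul_sum, mul_left_comm]

noncomputable def bWeight (n : ℕ) : ℝ := if n = 0 then 0 else ((n : ℝ) + 1)⁻¹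

theorem bWeight_nonneg (n : ℕ) : 0 ≤ bWeight n := by
  unfold bWeight
  split_ifs <;> positivity

theorem norm_Bfun_le {y : ℕ → ℂ} {C : ℝ} (hy : ∀ i, ‖y i‖ ≤ C) (n : ℕ) :
    ‖Bfun y n‖ ≤ C * bWeight n := by
  rcases Nat.eq_zero_or_pos n with rfl | hn
  · simp [Bfun, bWeight]
  have hsum : ‖∑ j ∈ range n, y j‖ ≤ n * C :=
    (norm_sum_le _ _).trans (by simpa using Finset.sum_le_sum fun j (_ : j ∈ range n) => hy j)
  calc ‖Bfun y n‖ = 1 / (n * (n + 1)) * ‖∑ j ∈ range n, y j‖ := by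
        rw [Bfun, if_neg hn.ne', norm_mul]
        norm_cast
        rw [norm_div, norm_one, Complex.norm_natCast]
    _ ≤ 1 / (n * (n + 1)) * (n * C) := by gcongr
    _ = C * bWeight n := by
        rw [bWeight, if_neg hn.ne']
        field_simp

theorem hasSum_bWeight_rpow {p : ℝ} (hp : 1 < p) :
    HasSum (fun n => bWeight n ^ p) (∑' k : ℕ, ((k : ℝ) + 2) ^ (-p)) := by
  have hsummable : Summable fun k : ℕ => ((k : ℝ) + 2) ^ (-p) := by
    simpa using (summable_nat_add_iff 2).mpr (Real.summable_nat_rpow.mpr (by linarith : -p < -1))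
  have hshift : (fun k : ℕ => bWeight (k + 1) ^ p) = fun k : ℕ => ((k : ℝ) + 2) ^ (-p) :=
    funext fun k => by
      rw [bWeight, if_neg k.succ_ne_zero, Real.inv_rpow (by positivity),
        ← Real.rpow_neg (by positivity)]
      push_cast
      ring_nf
  rw [← hasSum_nat_add_iff' 1, hshift]
  simpa [bWeight, Real.zero_rpow (by linarith : p ≠ 0)] using hsummable.hasSum

section Operator

variable {p : ℝ} (hp : 1 < p)
include hp

noncomputable def bWeightLp : lp (fun _ : ℕ => ℝ) (ENNReal.ofReal p) :=
  ⟨bWeight, memℓp_gen <| by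
    rw [ENNReal.toReal_ofReal (by linarith)]
    simpa only [Real.norm_of_nonneg (bWeight_nonneg _)] using (hasSum_bWeight_rpow hp).summable⟩

theorem norm_bWeightLp : ‖bWeightLp hp‖ = (∑' k : ℕ, ((k : ℝ) + 2) ^ (-p)) ^ (1 / p) := by
  have hp_toReal : (ENNReal.ofReal p).toReal = p := ENNReal.toReal_ofReal (by linarith)
  rw [lp.norm_eq_tsum_rpow (by linarith), hp_toReal]
  simp only [bWeightLp, Real.norm_of_nonneg (bWeight_nonneg _)]
  rw [(hasSum_bWeight_rpow hp).tsum_eq]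

theorem norm_Bfun_apply_le (y : lp (fun _ : ℕ => ℂ) (ENNReal.ofReal p)) (n : ℕ) :
    ‖Bfun (fun i => y i) n‖ ≤ ‖y‖ * bWeightLp hp n :=
  norm_Bfun_le (fun i => lp.norm_apply_le_norm (by simp; linarith) y i) n

variable [Fact (1 ≤ ENNReal.ofReal p)]

noncomputable def bOperator :
    lp (fun _ : ℕ => ℂ) (ENNReal.ofReal p) →L[ℂ] lp (fun _ : ℕ => ℂ) (ENNReal.ofReal p) :=
  lp.clmOfDominated (bLinearMap ∘ₗ LinearMap.pi (lp.evalₗ _ _)) (bWeightLp hp)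
    (norm_Bfun_apply_le hp)

end Operator

/-- For 1 < p < ∞, B is a bounded operator on ℓ^p(ℕ₀) with
‖B‖ ≤ (Σ_{k=2}^∞ k^{−p})^{1/p}, and B is a compact operator. -/
theorem stmt_11 (p : ℝ) (hp : 1 < p)
    [Fact (1 ≤ ENNReal.ofReal p)] :
    ∃ B : lp (fun _ : ℕ => ℂ) (ENNReal.ofReal p) →L[ℂ] lp (fun _ : ℕ => ℂ) (ENNReal.ofReal p),
      (∀ (y : lp (fun _ : ℕ => ℂ) (ENNReal.ofReal p)) (n : ℕ),
          (B y) n = Bfun (fun i => y i) n) ∧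
      ‖B‖ ≤ (∑' k : ℕ, ((k : ℝ) + 2) ^ (-p)) ^ (1 / p) ∧
      IsCompactOperator B := by
  refine ⟨bOperator hp, fun y n => rfl, ?_, ?_⟩
  · rw [← norm_bWeightLp hp]
    exact lp.opNorm_le_of_forall_norm_apply_le _ _ (norm_Bfun_apply_le hp)
  · exact lp.isCompactOperator_of_forall_norm_apply_le ENNReal.ofReal_ne_top _ _
      (norm_Bfun_apply_le hp)
end
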